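/- Let T > 0, I = [0,T], V a real Hilbert space, X, Z real Banach spaces, Y₁ a real Hilbert space, K_V ⊆ V nonempty closed convex, K_Y ⊆ Y₁ nonempty convex. Assume H(A) (constants L₁, L₂, m), H(j) (constants α, β, γ), H(R) (constants r₁, r₂), H(S) (constant s). Fix a continuous ξ : I → Y₁ with values in K_Y, a continuous w : I → ℝ, and f ∈ C(I; V). For u₁, u₂ ∈ C(I; K_V) let η₁, η₂ ∈ C(I; K_V) be such that for i = 1, 2, all t ∈ I and all v ∈ K_V: ⟨A(R(uᵢ, ξ)(t), ηᵢ(t)), v − ηᵢ(t)⟩_V + j(Suᵢ(t), uᵢ(t), w(t), v) − j(Suᵢ(t), uᵢ(t), w(t), ηᵢ(t)) ≥ ⟨f(t), v − ηᵢ(t)⟩_V. Then for all t ∈ I: m‖η₁(t) − η₂(t)‖_V ≤ (L₁r₁ + αs)∫₀ᵗ‖u₁(σ) − u₂(σ)‖_V dσ + β‖u₁(t) − u₂(t)‖_V. -/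

import Mathlib

/-!
Fix `t`, write `eᵢ = ηᵢ t`, `aᵢ = R uᵢ ξ t`. Testing the inequality for `e₁` with `v = e₂` and the
one for `e₂` with `v = e₁` and adding, the `f`-terms cancel and `⟪A(a₁, e₁) − A(a₂, e₂), e₁ − e₂⟫`
is bounded by the `j`-difference, hence by `(α‖Su₁ t − Su₂ t‖ + β‖u₁ t − u₂ t‖)‖e₁ − e₂‖`.
Splitting the inner product through `A(a₁, e₂)`, strong monotonicity bounds it below by
`m‖e₁ − e₂‖² − L₁‖a₁ − a₂‖‖e₁ − e₂‖`. Dividing by `‖e₁ − e₂‖` and using H(R), H(S) finishes.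
-/

open scoped RealInnerProductSpace

section VariationalPair

variable {V : Type*} [NormedAddCommGroup V] [InnerProductSpace ℝ V]

theorem inner_sub_le_of_variational_pair {y₁ y₂ f e₁ e₂ : V} {φ₁ φ₂ : V → ℝ}
    (h₁ : ⟪y₁, e₂ - e₁⟫ + φ₁ e₂ - φ₁ e₁ ≥ ⟪f, e₂ - e₁⟫)
    (h₂ : ⟪y₂, e₁ - e₂⟫ + φ₂ e₁ - φ₂ e₂ ≥ ⟪f, e₁ - e₂⟫) :
    ⟪y₁ - y₂, e₁ - e₂⟫ ≤ φ₁ e₂ - φ₁ e₁ + φ₂ e₁ - φ₂ e₂ := by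
  rw [← neg_sub e₁ e₂, inner_neg_right, inner_neg_right] at h₁
  rw [inner_sub_left]
  linarith

theorem mul_le_of_mul_sq_le_mul {m x c : ℝ} (h : m * x ^ 2 ≤ c * x) (hx : 0 ≤ x) (hc : 0 ≤ c) :
    m * x ≤ c := by
  rcases hx.eq_or_lt with rfl | hx
  · simpa using hc
  · exact le_of_mul_le_mul_right (by linarith [sq x]) hx

theorem mul_norm_sub_le_of_variational_pair {y₁ y₂ z f e₁ e₂ : V} {φ₁ φ₂ : V → ℝ}
    {m δ K : ℝ} (hδ : 0 ≤ δ) (hK : 0 ≤ K)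
    (hmono : m * ‖e₁ - e₂‖ ^ 2 ≤ ⟪y₁ - z, e₁ - e₂⟫) (hz : ‖z - y₂‖ ≤ δ)
    (hφ : φ₁ e₂ - φ₁ e₁ + φ₂ e₁ - φ₂ e₂ ≤ K * ‖e₁ - e₂‖)
    (h₁ : ⟪y₁, e₂ - e₁⟫ + φ₁ e₂ - φ₁ e₁ ≥ ⟪f, e₂ - e₁⟫)
    (h₂ : ⟪y₂, e₁ - e₂⟫ + φ₂ e₁ - φ₂ e₂ ≥ ⟪f, e₁ - e₂⟫) :
    m * ‖e₁ - e₂‖ ≤ δ + K := by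
  have hsum := inner_sub_le_of_variational_pair h₁ h₂
  have hsplit : ⟪y₁ - y₂, e₁ - e₂⟫ = ⟪y₁ - z, e₁ - e₂⟫ + ⟪z - y₂, e₁ - e₂⟫ := by
    rw [← inner_add_left, sub_add_sub_cancel]
  have hcs : ⟪z - y₂, e₁ - e₂⟫ ≥ -(δ * ‖e₁ - e₂‖) :=
    calc ⟪z - y₂, e₁ - e₂⟫ ≥ -(‖z - y₂‖ * ‖e₁ - e₂‖) :=
          neg_le_of_abs_le (abs_real_inner_le_norm _ _)
      _ ≥ -(δ * ‖e₁ - e₂‖) := by gcongr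
  refine mul_le_of_mul_sq_le_mul ?_ (norm_nonneg _) (add_nonneg hδ hK)
  linarith

end VariationalPair

theorem stmt5_general
    {V : Type*} [NormedAddCommGroup V] [InnerProductSpace ℝ V]
    {X : Type*} [NormedAddCommGroup X]
    {Z : Type*} [NormedAddCommGroup Z]
    {Y₁ : Type*} [NormedAddCommGroup Y₁]
    (T : ℝ) (hT : 0 < T)
    (KV : Set V)
    (KY : Set Y₁)
    -- H(A)
    (A : X → V → V) (L₁ m : ℝ) (hL₁ : 0 < L₁)
    (hA₁ : ∀ (a₁ a₂ : X), ∀ b ∈ KV, ‖A a₁ b - A a₂ b‖ ≤ L₁ * ‖a₁ - a₂‖)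
    (hA₃ : ∀ (a : X), ∀ b₁ ∈ KV, ∀ b₂ ∈ KV,
      m * ‖b₁ - b₂‖ ^ 2 ≤ (inner ℝ (A a b₁ - A a b₂) (b₁ - b₂) : ℝ))
    -- H(j)
    (j : Z → V → ℝ → V → ℝ) (α β γ : ℝ) (hα : 0 < α) (hβ : 0 < β)
    (hjest : ∀ (a₁ a₂ : Z) (b₁ b₂ : V) (c₁ c₂ : ℝ), ∀ d₁ ∈ KV, ∀ d₂ ∈ KV,
      j a₁ b₁ c₁ d₂ - j a₁ b₁ c₁ d₁ + j a₂ b₂ c₂ d₁ - j a₂ b₂ c₂ d₂ ≤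
        α * ‖a₁ - a₂‖ * ‖d₁ - d₂‖ + β * ‖b₁ - b₂‖ * ‖d₁ - d₂‖ +
          γ * |c₁ - c₂| * ‖d₁ - d₂‖)
    -- H(R)
    (R : C(Set.Icc (0:ℝ) T, V) → C(Set.Icc (0:ℝ) T, Y₁) → C(Set.Icc (0:ℝ) T, X))
    (r₁ : ℝ)
    (hR₁ : ∀ (a₁ a₂ : C(Set.Icc (0:ℝ) T, V)) (b : C(Set.Icc (0:ℝ) T, Y₁)),
      (∀ t, a₁ t ∈ KV) → (∀ t, a₂ t ∈ KV) → (∀ t, b t ∈ KY) →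
      ∀ t : Set.Icc (0:ℝ) T, ‖R a₁ b t - R a₂ b t‖ ≤
        r₁ * ∫ σ in (0:ℝ)..(t:ℝ),
          ‖a₁ (Set.projIcc 0 T hT.le σ) - a₂ (Set.projIcc 0 T hT.le σ)‖)
    -- H(S)
    (S : C(Set.Icc (0:ℝ) T, V) → C(Set.Icc (0:ℝ) T, Z)) (s : ℝ)
    (hS : ∀ (a₁ a₂ : C(Set.Icc (0:ℝ) T, V)),
      (∀ t, a₁ t ∈ KV) → (∀ t, a₂ t ∈ KV) →
      ∀ t : Set.Icc (0:ℝ) T, ‖S a₁ t - S a₂ t‖ ≤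
        s * ∫ σ in (0:ℝ)..(t:ℝ),
          ‖a₁ (Set.projIcc 0 T hT.le σ) - a₂ (Set.projIcc 0 T hT.le σ)‖)
    -- fixed data
    (ξ : C(Set.Icc (0:ℝ) T, Y₁)) (hξ : ∀ t, ξ t ∈ KY)
    (w : C(Set.Icc (0:ℝ) T, ℝ))
    (f : C(Set.Icc (0:ℝ) T, V))
    -- the two frozen inputs and corresponding solutions
    (u₁ u₂ η₁ η₂ : C(Set.Icc (0:ℝ) T, V))
    (hu₁ : ∀ t, u₁ t ∈ KV) (hu₂ : ∀ t, u₂ t ∈ KV)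
    (hη₁ : ∀ t, η₁ t ∈ KV) (hη₂ : ∀ t, η₂ t ∈ KV)
    (hvi₁ : ∀ t : Set.Icc (0:ℝ) T, ∀ v ∈ KV,
      (inner ℝ (A (R u₁ ξ t) (η₁ t)) (v - η₁ t) : ℝ) +
          j (S u₁ t) (u₁ t) (w t) v - j (S u₁ t) (u₁ t) (w t) (η₁ t) ≥
        (inner ℝ (f t) (v - η₁ t) : ℝ))
    (hvi₂ : ∀ t : Set.Icc (0:ℝ) T, ∀ v ∈ KV,
      (inner ℝ (A (R u₂ ξ t) (η₂ t)) (v - η₂ t) : ℝ) +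
          j (S u₂ t) (u₂ t) (w t) v - j (S u₂ t) (u₂ t) (w t) (η₂ t) ≥
        (inner ℝ (f t) (v - η₂ t) : ℝ)) :
    ∀ t : Set.Icc (0:ℝ) T,
      m * ‖η₁ t - η₂ t‖ ≤
        (L₁ * r₁ + α * s) * (∫ σ in (0:ℝ)..(t:ℝ),
            ‖u₁ (Set.projIcc 0 T hT.le σ) - u₂ (Set.projIcc 0 T hT.le σ)‖) +
          β * ‖u₁ t - u₂ t‖ := by
  intro t
  have hj := hjest (S u₁ t) (S u₂ t) (u₁ t) (u₂ t) (w t) (w t) _ (hη₁ t) _ (hη₂ t)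
  rw [sub_self, abs_zero, mul_zero, zero_mul, add_zero, ← add_mul] at hj
  calc m * ‖η₁ t - η₂ t‖
      ≤ L₁ * ‖R u₁ ξ t - R u₂ ξ t‖ + (α * ‖S u₁ t - S u₂ t‖ + β * ‖u₁ t - u₂ t‖) :=
        mul_norm_sub_le_of_variational_pair (by positivity) (by positivity)
          (hA₃ _ _ (hη₁ t) _ (hη₂ t)) (hA₁ _ _ _ (hη₂ t)) hj
          (hvi₁ t _ (hη₂ t)) (hvi₂ t _ (hη₁ t))
    _ ≤ L₁ * (r₁ * ∫ σ in (0:ℝ)..(t:ℝ),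
            ‖u₁ (Set.projIcc 0 T hT.le σ) - u₂ (Set.projIcc 0 T hT.le σ)‖) +
          (α * (s * ∫ σ in (0:ℝ)..(t:ℝ),
            ‖u₁ (Set.projIcc 0 T hT.le σ) - u₂ (Set.projIcc 0 T hT.le σ)‖) +
            β * ‖u₁ t - u₂ t‖) := by
        gcongr
        · exact hR₁ u₁ u₂ ξ hu₁ hu₂ hξ t
        · exact hS u₁ u₂ hu₁ hu₂ t
    _ = _ := by ring

/-- The contraction estimate for the fixed-point operator `Λ` in the proof of
Theorem 3.1: if `ηᵢ` solves the quasivariational inequality frozen at `uᵢ`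
(`i = 1, 2`), then for all `t ∈ I`,
`m‖η₁(t) − η₂(t)‖ ≤ (L₁r₁ + αs)∫₀ᵗ‖u₁ − u₂‖ + β‖u₁(t) − u₂(t)‖`. -/
theorem stmt5
    {V : Type*} [NormedAddCommGroup V] [InnerProductSpace ℝ V] [CompleteSpace V]
    {X : Type*} [NormedAddCommGroup X] [NormedSpace ℝ X] [CompleteSpace X]
    {Z : Type*} [NormedAddCommGroup Z] [NormedSpace ℝ Z] [CompleteSpace Z]
    {Y₁ : Type*} [NormedAddCommGroup Y₁] [InnerProductSpace ℝ Y₁] [CompleteSpace Y₁]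
    (T : ℝ) (hT : 0 < T)
    (KV : Set V) (hKVne : KV.Nonempty) (hKVcl : IsClosed KV) (hKVcv : Convex ℝ KV)
    (KY : Set Y₁) (hKYne : KY.Nonempty) (hKYcv : Convex ℝ KY)
    -- H(A)
    (A : X → V → V) (L₁ L₂ m : ℝ) (hL₁ : 0 < L₁) (hL₂ : 0 < L₂) (hm : 0 < m)
    (hA₁ : ∀ (a₁ a₂ : X), ∀ b ∈ KV, ‖A a₁ b - A a₂ b‖ ≤ L₁ * ‖a₁ - a₂‖)
    (hA₂ : ∀ (a : X), ∀ b₁ ∈ KV, ∀ b₂ ∈ KV, ‖A a b₁ - A a b₂‖ ≤ L₂ * ‖b₁ - b₂‖)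
    (hA₃ : ∀ (a : X), ∀ b₁ ∈ KV, ∀ b₂ ∈ KV,
      m * ‖b₁ - b₂‖ ^ 2 ≤ (inner ℝ (A a b₁ - A a b₂) (b₁ - b₂) : ℝ))
    -- H(j)
    (j : Z → V → ℝ → V → ℝ) (α β γ : ℝ) (hα : 0 < α) (hβ : 0 < β) (hγ : 0 < γ)
    (hjcv : ∀ (a : Z) (b : V) (c : ℝ), ConvexOn ℝ KV (j a b c))
    (hjlsc : ∀ (a : Z) (b : V) (c : ℝ), LowerSemicontinuousOn (j a b c) KV)
    (hjest : ∀ (a₁ a₂ : Z) (b₁ b₂ : V) (c₁ c₂ : ℝ), ∀ d₁ ∈ KV, ∀ d₂ ∈ KV,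
      j a₁ b₁ c₁ d₂ - j a₁ b₁ c₁ d₁ + j a₂ b₂ c₂ d₁ - j a₂ b₂ c₂ d₂ ≤
        α * ‖a₁ - a₂‖ * ‖d₁ - d₂‖ + β * ‖b₁ - b₂‖ * ‖d₁ - d₂‖ +
          γ * |c₁ - c₂| * ‖d₁ - d₂‖)
    -- H(R)
    (R : C(Set.Icc (0:ℝ) T, V) → C(Set.Icc (0:ℝ) T, Y₁) → C(Set.Icc (0:ℝ) T, X))
    (r₁ r₂ : ℝ) (hr₁ : 0 < r₁) (hr₂ : 0 < r₂)
    (hR₁ : ∀ (a₁ a₂ : C(Set.Icc (0:ℝ) T, V)) (b : C(Set.Icc (0:ℝ) T, Y₁)),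
      (∀ t, a₁ t ∈ KV) → (∀ t, a₂ t ∈ KV) → (∀ t, b t ∈ KY) →
      ∀ t : Set.Icc (0:ℝ) T, ‖R a₁ b t - R a₂ b t‖ ≤
        r₁ * ∫ σ in (0:ℝ)..(t:ℝ),
          ‖a₁ (Set.projIcc 0 T hT.le σ) - a₂ (Set.projIcc 0 T hT.le σ)‖)
    (hR₂ : ∀ (a : C(Set.Icc (0:ℝ) T, V)) (b₁ b₂ : C(Set.Icc (0:ℝ) T, Y₁)),
      (∀ t, a t ∈ KV) → (∀ t, b₁ t ∈ KY) → (∀ t, b₂ t ∈ KY) →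
      ∀ t : Set.Icc (0:ℝ) T, ‖R a b₁ t - R a b₂ t‖ ≤
        r₂ * ∫ σ in (0:ℝ)..(t:ℝ),
          ‖b₁ (Set.projIcc 0 T hT.le σ) - b₂ (Set.projIcc 0 T hT.le σ)‖)
    -- H(S)
    (S : C(Set.Icc (0:ℝ) T, V) → C(Set.Icc (0:ℝ) T, Z)) (s : ℝ) (hs : 0 < s)
    (hS : ∀ (a₁ a₂ : C(Set.Icc (0:ℝ) T, V)),
      (∀ t, a₁ t ∈ KV) → (∀ t, a₂ t ∈ KV) →
      ∀ t : Set.Icc (0:ℝ) T, ‖S a₁ t - S a₂ t‖ ≤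
        s * ∫ σ in (0:ℝ)..(t:ℝ),
          ‖a₁ (Set.projIcc 0 T hT.le σ) - a₂ (Set.projIcc 0 T hT.le σ)‖)
    -- fixed data
    (ξ : C(Set.Icc (0:ℝ) T, Y₁)) (hξ : ∀ t, ξ t ∈ KY)
    (w : C(Set.Icc (0:ℝ) T, ℝ))
    (f : C(Set.Icc (0:ℝ) T, V))
    -- the two frozen inputs and corresponding solutions
    (u₁ u₂ η₁ η₂ : C(Set.Icc (0:ℝ) T, V))
    (hu₁ : ∀ t, u₁ t ∈ KV) (hu₂ : ∀ t, u₂ t ∈ KV)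
    (hη₁ : ∀ t, η₁ t ∈ KV) (hη₂ : ∀ t, η₂ t ∈ KV)
    (hvi₁ : ∀ t : Set.Icc (0:ℝ) T, ∀ v ∈ KV,
      (inner ℝ (A (R u₁ ξ t) (η₁ t)) (v - η₁ t) : ℝ) +
          j (S u₁ t) (u₁ t) (w t) v - j (S u₁ t) (u₁ t) (w t) (η₁ t) ≥
        (inner ℝ (f t) (v - η₁ t) : ℝ))
    (hvi₂ : ∀ t : Set.Icc (0:ℝ) T, ∀ v ∈ KV,
      (inner ℝ (A (R u₂ ξ t) (η₂ t)) (v - η₂ t) : ℝ) +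
          j (S u₂ t) (u₂ t) (w t) v - j (S u₂ t) (u₂ t) (w t) (η₂ t) ≥
        (inner ℝ (f t) (v - η₂ t) : ℝ)) :
    ∀ t : Set.Icc (0:ℝ) T,
      m * ‖η₁ t - η₂ t‖ ≤
        (L₁ * r₁ + α * s) * (∫ σ in (0:ℝ)..(t:ℝ),
            ‖u₁ (Set.projIcc 0 T hT.le σ) - u₂ (Set.projIcc 0 T hT.le σ)‖) +
          β * ‖u₁ t - u₂ t‖ :=
  stmt5_general T hT KV KY A L₁ m hL₁ hA₁ hA₃ j α β γ hα hβ hjest R r₁ hR₁ S s hS ξ hξ w f u₁ u₂ η₁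
    η₂ hu₁ hu₂ hη₁ hη₂ hvi₁ hvi₂
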